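/- arXiv:1702.00374 — 2 statements merged into one kernel-verified Lean document; each statement's English description precedes it below -/
import Mathlib

section
/- There exist a CPO X with a metric d : X × X → ℝ≥0∞ and an ω-chain of continuous, non-expansive functions (fₙ : X → X) whose least upper bound is not non-expansive. Concretely, take X = ℕ∞ + ℕ∞ (two copies of the naturals extended with a top element, with the linear order), with d(inl n, inr n) = 1 if n = ∞ and 0 otherwise, and all other distinct pairs at distance ∞; the constant-in-value functions fₙ(ι_k m) = ι_k n form a chain whose supremum f satisfies d(f(ι₁ 0), f(ι₂ 0)) = 1 > 0 = d(ι₁ 0, ι₂ 0). -/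
open ENNReal OmegaCompletePartialOrder

/-- `d` is an extended pseudo-metric on `X`. -/
def IsEPMetric {X : Type*} (d : X → X → ℝ≥0∞) : Prop :=
  (∀ x, d x x = 0) ∧ (∀ x y, d x y = d y x) ∧ (∀ x y z, d x z ≤ d x y + d y z)

/-- Non-expansiveness of `f` with respect to metrics `dX`, `dY`. -/
def NonExpansive {X Y : Type*} (dX : X → X → ℝ≥0∞) (dY : Y → Y → ℝ≥0∞)
    (f : X → Y) : Prop :=
  ∀ x y, dY (f x) (f y) ≤ dX x y

/-!
Take two copies of `ℕ∞`, realised as `Bool × ℕ∞`. Points on different levels are infinitely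
far apart, and the two points on level `b` are at distance `δ b`, where `δ` is `0` on the finite
levels and `1` at `⊤`. The map `fₙ` sends every point to level `n` of its copy, where all
distances vanish, so it is non-expansive; but the lub sends every point to level `⊤`, which
moves `(true, 0)` and `(false, 0)`, at distance `0`, to points at distance `1`.
-/

namespace OmegaCompletePartialOrder.ContinuousHom

variable {α β : Type*} [OmegaCompletePartialOrder α] [OmegaCompletePartialOrder β]

theorem isLUB_range_of_forall_isLUB_apply {ι : Type*} {f : ι → α →𝒄 β} {F : α →𝒄 β}
    (h : ∀ x, IsLUB (Set.range fun i => f i x) (F x)) : IsLUB (Set.range f) F := by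
  refine ⟨?_, fun G hG x => (h x).2 ?_⟩ <;> rintro _ ⟨i, rfl⟩
  · exact fun x => (h x).1 ⟨i, rfl⟩
  · exact hG ⟨i, rfl⟩ x

def setSnd (b : β) : α × β →𝒄 α × β :=
  ofFun fun p => (p.1, b)

@[simp]
theorem setSnd_apply (b : β) (p : α × β) : setSnd b p = (p.1, b) :=
  rfl

theorem monotone_setSnd : Monotone (setSnd : β → α × β →𝒄 α × β) :=
  fun _ _ h _ => ⟨le_rfl, h⟩

theorem isLUB_range_setSnd {ι : Type*} [Nonempty ι] {c : ι → β} {b : β}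
    (h : IsLUB (Set.range c) b) : IsLUB (Set.range fun i => (setSnd (c i) : α × β →𝒄 α × β))
      (setSnd b) := by
  refine isLUB_range_of_forall_isLUB_apply fun p => isLUB_prod.2 ⟨?_, ?_⟩
  · simp [← Set.range_comp, Function.comp_def]
  · simpa [← Set.range_comp, Function.comp_def] using h

end OmegaCompletePartialOrder.ContinuousHom

open OmegaCompletePartialOrder.ContinuousHom

theorem ENat.isLUB_range_natCast : IsLUB (Set.range ((↑) : ℕ → ℕ∞)) ⊤ :=
  ENat.iSup_natCast ▸ isLUB_iSup

section DiscreteFiberEDist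

variable {α β : Type*} [DecidableEq α] [DecidableEq β]

noncomputable def discreteFiberEDist (δ : β → ℝ≥0∞) (x y : α × β) : ℝ≥0∞ :=
  if x.2 = y.2 then (if x.1 = y.1 then 0 else δ x.2) else ⊤

variable (δ : β → ℝ≥0∞)

theorem discreteFiberEDist_of_ne_fiber {x y : α × β} (h : x.2 ≠ y.2) :
    discreteFiberEDist δ x y = ⊤ :=
  if_neg h

theorem discreteFiberEDist_mk_mk {a a' : α} (ha : a ≠ a') (b : β) :
    discreteFiberEDist δ (a, b) (a', b) = δ b := by
  simp [discreteFiberEDist, ha]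

theorem discreteFiberEDist_mk_mk_le (a a' : α) (b : β) :
    discreteFiberEDist δ (a, b) (a', b) ≤ δ b := by
  unfold discreteFiberEDist
  split_ifs <;> simp_all

theorem isEPMetric_discreteFiberEDist : IsEPMetric (discreteFiberEDist (α := α) δ) := by
  refine ⟨fun x => by simp [discreteFiberEDist], fun x y => ?_, fun x y z => ?_⟩
  · unfold discreteFiberEDist
    split_ifs <;> simp_all [eq_comm]
  by_cases hxy : x.2 = y.2
  swap
  · simp [discreteFiberEDist_of_ne_fiber δ hxy]
  by_cases hyz : y.2 = z.2
  swap
  · simp [discreteFiberEDist_of_ne_fiber δ hyz]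
  obtain ⟨a, b⟩ := x
  obtain ⟨a', _⟩ := y
  obtain ⟨a'', _⟩ := z
  obtain rfl : b = _ := hxy
  obtain rfl : b = _ := hyz
  by_cases hxz : a = a''
  · simp [discreteFiberEDist, hxz]
  rw [discreteFiberEDist_mk_mk δ hxz]
  by_cases hxy' : a = a'
  · subst hxy'
    exact (discreteFiberEDist_mk_mk δ hxz b).ge.trans le_add_self
  · exact (discreteFiberEDist_mk_mk δ hxy' b).ge.trans le_self_add

theorem nonExpansive_setSnd_of_eq_zero [OmegaCompletePartialOrder α] [OmegaCompletePartialOrder β]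
    {b : β} (hb : δ b = 0) :
    NonExpansive (discreteFiberEDist δ) (discreteFiberEDist δ) (setSnd (α := α) b) :=
  fun x y => (discreteFiberEDist_mk_mk_le δ x.1 y.1 b).trans (hb.trans_le zero_le)

end DiscreteFiberEDist

/-- There is a CPO with an extended pseudo-metric and an ω-chain of continuous
non-expansive endofunctions whose least upper bound fails to be non-expansive. -/
theorem exists_chain_of_nonexpansive_with_nonexpansive_failing_lub :
    ∃ (X : Type) (_ : OmegaCompletePartialOrder X) (d : X → X → ℝ≥0∞)
      (f : ℕ → X →𝒄 X) (F : X →𝒄 X),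
      IsEPMetric d ∧
      Monotone f ∧
      (∀ n, NonExpansive d d (f n)) ∧
      IsLUB (Set.range f) F ∧
      ¬ NonExpansive d d F := by
  let δ : ℕ∞ → ℝ≥0∞ := fun b => if b = ⊤ then 1 else 0
  refine ⟨Bool × ℕ∞, inferInstance, discreteFiberEDist δ, fun n => setSnd (n : ℕ∞), setSnd ⊤,
    isEPMetric_discreteFiberEDist δ, monotone_setSnd.comp Nat.mono_cast,
    fun n => nonExpansive_setSnd_of_eq_zero δ (if_neg (ENat.natCast_ne_top n)),
    isLUB_range_setSnd ENat.isLUB_range_natCast, fun h => ?_⟩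
  have := h (true, 0) (false, 0)
  simp [discreteFiberEDist_mk_mk, δ] at this
end

section
/- Let X be a pointed metric CPO and r ∈ ℝ≥0∞. For continuous functions f, g : X → X that are r-sensitive (d(f x, f y) ≤ r·d(x, y)), the iterates satisfy d(fⁱ(⊥), gⁱ(⊥)) ≤ (Σ_{j<i} rʲ)·d(f, g) for all i, where d(f,g) = sup_x d(f x, g x). Consequently, if r < 1 then the least fixed points satisfy d(fix f, fix g) ≤ (1/(1−r))·d(f, g). -/
/-!
By the triangle inequality through `f (gⁿ ⊥)`, the distance `dₙ = d (fⁿ ⊥) (gⁿ ⊥)` obeys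
`dₙ₊₁ ≤ r dₙ + d(f, g)`, which unrolls to the geometric sum. The iterates form ω-chains whose lubs
are the least fixed points, and the metric-CPO condition passes the uniform bound
`(∑ j < i, rʲ) d(f, g) ≤ (1 - r)⁻¹ d(f, g)` to these lubs.
-/

open ENNReal OmegaCompletePartialOrder

/-- Fuzz multiplication on ℝ≥0∞: usual multiplication except `0 * ∞ = ∞`. -/
noncomputable def fuzzMul (r s : ℝ≥0∞) : ℝ≥0∞ :=
  if r = 0 ∧ s = ∞ then ∞ else r * s

/-- The metric-CPO compatibility condition. -/
def IsMetricCPO {X : Type*} [OmegaCompletePartialOrder X]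
    (d : X → X → ℝ≥0∞) : Prop :=
  ∀ (r : ℝ≥0∞) (c c' : Chain X),
    (∀ i, d (c i) (c' i) ≤ r) → d (ωSup c) (ωSup c') ≤ r

lemma fuzzMul_of_ne_zero {r s : ℝ≥0∞} (h : r ≠ 0) : fuzzMul r s = r * s := by
  simp [fuzzMul, h]

lemma fuzzMul_of_ne_top {r s : ℝ≥0∞} (h : s ≠ ∞) : fuzzMul r s = r * s := by
  simp [fuzzMul, h]

lemma fuzzMul_le_mul_of_le {r s t : ℝ≥0∞} (hst : s ≤ t) (ht : r = 0 → t ≠ ∞) :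
    fuzzMul r s ≤ r * t := by
  by_cases hr : r = 0
  · rw [fuzzMul_of_ne_top (ne_top_of_le_ne_top (ht hr) hst)]
    gcongr
  · rw [fuzzMul_of_ne_zero hr]
    gcongr

lemma fuzzMul_le_mul_of_le_left {r s t : ℝ≥0∞} (hrs : r ≤ s) (hs : s ≠ 0) :
    fuzzMul r t ≤ s * t := by
  by_cases ht : t = ∞
  · simp [ht, ENNReal.mul_top hs]
  · rw [fuzzMul_of_ne_top ht]
    gcongr

section Iterate

variable {X : Type*} {d : X → X → ℝ≥0∞} {f g : X → X} {r D : ℝ≥0∞}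

lemma dist_iterate_le_geom_sum_mul (hself : ∀ x, d x x = 0)
    (htri : ∀ x y z, d x z ≤ d x y + d y z) (hf : ∀ x y, d (f x) (f y) ≤ fuzzMul r (d x y))
    (hfg : ∀ x, d (f x) (g x) ≤ D) (hD : D ≠ ∞) (x : X) (n : ℕ) :
    d (f^[n] x) (g^[n] x) ≤ (∑ j ∈ Finset.range n, r ^ j) * D := by
  induction n with
  | zero => simp [hself]
  | succ n ih =>
    have hfin : r = 0 → (∑ j ∈ Finset.range n, r ^ j) * D ≠ ∞ := fun hr =>
      mul_ne_top (sum_ne_top.2 fun j _ => pow_ne_top (hr ▸ zero_ne_top)) hD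
    rw [Function.iterate_succ_apply', Function.iterate_succ_apply']
    calc d (f (f^[n] x)) (g (g^[n] x))
        ≤ d (f (f^[n] x)) (f (g^[n] x)) + d (f (g^[n] x)) (g (g^[n] x)) := htri _ _ _
      _ ≤ r * ((∑ j ∈ Finset.range n, r ^ j) * D) + D :=
        add_le_add ((hf _ _).trans (fuzzMul_le_mul_of_le ih hfin)) (hfg _)
      _ = (∑ j ∈ Finset.range (n + 1), r ^ j) * D := by
        rw [geom_sum_succ, add_mul, one_mul, mul_assoc]

lemma dist_iterate_le_fuzzMul_geom_sum (hself : ∀ x, d x x = 0)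
    (htri : ∀ x y z, d x z ≤ d x y + d y z) (hf : ∀ x y, d (f x) (f y) ≤ fuzzMul r (d x y))
    (hfg : ∀ x, d (f x) (g x) ≤ D) (x : X) (n : ℕ) :
    d (f^[n] x) (g^[n] x) ≤ fuzzMul (∑ j ∈ Finset.range n, r ^ j) D := by
  by_cases hD : D = ∞
  · cases n with
    | zero => simp [hself]
    | succ n =>
      have hsum : ∑ j ∈ Finset.range (n + 1), r ^ j ≠ 0 := by simp [Finset.sum_range_succ']
      simp [hD, fuzzMul_of_ne_zero hsum, mul_top hsum]
  · rw [fuzzMul_of_ne_top hD]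
    exact dist_iterate_le_geom_sum_mul hself htri hf hfg hD x n

end Iterate

lemma IsMetricCPO.dist_le_of_isLUB {X : Type*} [OmegaCompletePartialOrder X]
    {d : X → X → ℝ≥0∞} (hd : IsMetricCPO d) {c c' : Chain X} {l l' : X} {B : ℝ≥0∞}
    (hl : IsLUB (Set.range c) l) (hl' : IsLUB (Set.range c') l')
    (hB : ∀ i, d (c i) (c' i) ≤ B) : d l l' ≤ B := by
  rw [ωSup_eq_of_isLUB hl, ωSup_eq_of_isLUB hl']
  exact hd B c c' hB

theorem fixpoint_sensitivity_general {X : Type*}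
    [OmegaCompletePartialOrder X] [OrderBot X]
    (d : X → X → ℝ≥0∞) (hdm : IsEPMetric d) (hd : IsMetricCPO d)
    (r : ℝ≥0∞) (f g : X →𝒄 X)
    (hf : ∀ x y, d (f x) (f y) ≤ fuzzMul r (d x y)) :
    -- the iterates satisfy d(fⁱ ⊥, gⁱ ⊥) ≤ (Σ_{j<i} rʲ) · d(f, g)
    (∀ i : ℕ,
      d ((⇑f)^[i] ⊥) ((⇑g)^[i] ⊥) ≤
        fuzzMul (∑ j ∈ Finset.range i, r ^ j) (⨆ x : X, d (f x) (g x))) ∧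
    -- consequently, if r < 1, the least fixed points (Kleene lubs of the
    -- iterates) satisfy d(fix f, fix g) ≤ (1/(1−r)) · d(f, g)
    (r < 1 →
      ∀ lf lg : X,
        IsLUB (Set.range fun i : ℕ => (⇑f)^[i] ⊥) lf →
        IsLUB (Set.range fun i : ℕ => (⇑g)^[i] ⊥) lg →
        d lf lg ≤ fuzzMul (1 - r)⁻¹ (⨆ x : X, d (f x) (g x))) := by
  have iterates : ∀ i : ℕ, d ((⇑f)^[i] ⊥) ((⇑g)^[i] ⊥) ≤
      fuzzMul (∑ j ∈ Finset.range i, r ^ j) (⨆ x : X, d (f x) (g x)) :=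
    dist_iterate_le_fuzzMul_geom_sum hdm.1 hdm.2.2 hf (le_iSup (fun x => d (f x) (g x))) ⊥
  refine ⟨iterates, fun _ lf lg hlf hlg => ?_⟩
  have hinv : (1 - r)⁻¹ ≠ 0 := ENNReal.inv_ne_zero.2 (sub_ne_top one_ne_top)
  rw [fuzzMul_of_ne_zero hinv]
  refine hd.dist_le_of_isLUB (c := fixedPoints.iterateChain f ⊥ bot_le)
    (c' := fixedPoints.iterateChain g ⊥ bot_le) hlf hlg fun i => (iterates i).trans ?_
  exact fuzzMul_le_mul_of_le_left ((ENNReal.sum_le_tsum _).trans_eq (tsum_geometric r)) hinv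

theorem fixpoint_sensitivity {X : Type*}
    [OmegaCompletePartialOrder X] [OrderBot X]
    (d : X → X → ℝ≥0∞) (hdm : IsEPMetric d) (hd : IsMetricCPO d)
    (r : ℝ≥0∞) (f g : X →𝒄 X)
    (hf : ∀ x y, d (f x) (f y) ≤ fuzzMul r (d x y))
    (hg : ∀ x y, d (g x) (g y) ≤ fuzzMul r (d x y)) :
    -- the iterates satisfy d(fⁱ ⊥, gⁱ ⊥) ≤ (Σ_{j<i} rʲ) · d(f, g)
    (∀ i : ℕ,
      d ((⇑f)^[i] ⊥) ((⇑g)^[i] ⊥) ≤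
        fuzzMul (∑ j ∈ Finset.range i, r ^ j) (⨆ x : X, d (f x) (g x))) ∧
    -- consequently, if r < 1, the least fixed points (Kleene lubs of the
    -- iterates) satisfy d(fix f, fix g) ≤ (1/(1−r)) · d(f, g)
    (r < 1 →
      ∀ lf lg : X,
        IsLUB (Set.range fun i : ℕ => (⇑f)^[i] ⊥) lf →
        IsLUB (Set.range fun i : ℕ => (⇑g)^[i] ⊥) lg →
        d lf lg ≤ fuzzMul (1 - r)⁻¹ (⨆ x : X, d (f x) (g x))) :=
  fixpoint_sensitivity_general d hdm hd r f g hf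
end
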